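/- The 1-limited propagating tabled 0L system G over {a,b,c,d,e} with axiom e, table P₁ = {a→a, b→c, c→c, d→d, e→ab^m d} and table P₂ = {a→aa, b→b, c→c, d→dd, e→e}, where in each step exactly one occurrence of each distinct letter present is rewritten using rules from a single chosen table, generates exactly the language L_m = {e} ∪ {aⁿ w dⁿ | n ≥ 1, w ∈ {b,c}^m}. -/

import Mathlib

/-!
A 1-limited deterministic step amounts to marking, for each letter present, one of its
occurrences and replacing every marked letter `x` by `P x`. Marks on letters fixed by `P` do not
change the result, so a step may be built by marking only the letters that `P` moves.

Every step preserves the shape `aⁿ w dⁿ` with `w ∈ {b, c}^m`: exactly one `a` and one `d` are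
marked, so `P₁` keeps both blocks and `P₂` lengthens each by one letter, while both tables send
`b` and `c` to single letters in `{b, c}`. Conversely, `P₁` takes `e` to `a b^m d`, `P₂` pumps the
blocks, and `P₁` (with `e` absent) turns any chosen occurrence of `b` into `c`.
-/

/-- One k-limited derivation step: for each letter x, exactly min(k, |v|_x) occurrences
of x in v are rewritten, each by some rule of R with left side x; the remaining
occurrences stay unchanged. -/
def klStep {V : Type*} [DecidableEq V] (k : ℕ) (R : Set (V × List V)) (v w : List V) : Prop :=
  ∃ (S : Finset (Fin v.length)) (f : Fin v.length → List V),
    (∀ x : V, (S.filter (fun i => v.get i = x)).card = min k (v.count x)) ∧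
    (∀ i ∈ S, (v.get i, f i) ∈ R) ∧
    (∀ i, i ∉ S → f i = [v.get i]) ∧
    w = (List.ofFn f).flatten

/-- Deterministic k-limited step with rule function P. -/
def detStep {V : Type*} [DecidableEq V] (k : ℕ) (P : V → List V) : List V → List V → Prop :=
  klStep k {p | p.2 = P p.1}

/-- The language generated from axiom ω by a step relation. -/
def lang {V : Type*} (step : List V → List V → Prop) (ω : List V) : Set (List V) :=
  {w | Relation.ReflTransGen step ω w}

inductive V5 : Type
  | a | b | c | d | e
deriving DecidableEq

open V5

/-- L_m = {e} ∪ {aⁿ w dⁿ | n ≥ 1, w ∈ {b,c}^m}. -/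
def Lm (m : ℕ) : Set (List V5) :=
  {[e]} ∪ {z | ∃ n ≥ 1, ∃ w : List V5,
    w.length = m ∧ (∀ x ∈ w, x = b ∨ x = c) ∧
    z = List.replicate n a ++ w ++ List.replicate n d}

/-- Table P₁ = {a→a, b→c, c→c, d→d, e→a b^m d}. -/
def P1 (m : ℕ) : V5 → List V5
  | a => [a] | b => [c] | c => [c] | d => [d]
  | e => [a] ++ List.replicate m b ++ [d]

/-- Table P₂ = {a→aa, b→b, c→c, d→dd, e→e}. -/
def P2 : V5 → List V5
  | a => [a, a] | b => [b] | c => [c] | d => [d, d] | e => [e]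

namespace LimitedStep

open Finset

theorem countP_ofFn_eq_card {α : Type*} {n : ℕ} (p : α → Bool) (g : Fin n → α) :
    (List.ofFn g).countP p = #{i | p (g i)} := by
  induction n with
  | zero => simp
  | succ n ih =>
    rw [List.ofFn_succ, List.countP_cons, ih, Fin.card_filter_univ_succ']
    by_cases h : p (g 0) <;> simp [h, add_comm]

section Marking

variable {V : Type*}

/-- A marked word lists the letters of a word, each flagged by whether that occurrence is
rewritten. -/
def rewriteMarked (P : V → List V) (M : List (V × Bool)) : List V :=
  M.flatMap fun p => if p.2 then P p.1 else [p.1]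

def unmarked (l : List V) : List (V × Bool) := l.map (·, false)

@[simp]
theorem rewriteMarked_append (P : V → List V) (M N : List (V × Bool)) :
    rewriteMarked P (M ++ N) = rewriteMarked P M ++ rewriteMarked P N :=
  List.flatMap_append

theorem rewriteMarked_cons (P : V → List V) (x : V) (β : Bool) (M : List (V × Bool)) :
    rewriteMarked P ((x, β) :: M) = (if β then P x else [x]) ++ rewriteMarked P M :=
  List.flatMap_cons

theorem rewriteMarked_ofFn (P : V → List V) {n : ℕ} (g : Fin n → V × Bool) :
    rewriteMarked P (List.ofFn g) =
      (List.ofFn fun i => if (g i).2 then P (g i).1 else [(g i).1]).flatten := by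
  rw [rewriteMarked, List.flatMap_def, List.map_ofFn]
  rfl

@[simp]
theorem map_fst_unmarked (l : List V) : (unmarked l).map Prod.fst = l := by
  simp [unmarked, Function.comp_def]

@[simp]
theorem rewriteMarked_unmarked (P : V → List V) (l : List V) :
    rewriteMarked P (unmarked l) = l := by
  simp [unmarked, rewriteMarked, List.flatMap_map]

theorem rewriteMarked_of_maps_singleton {P : V → List V} {s : Set V}
    (hP : ∀ x ∈ s, ∃ y ∈ s, P x = [y]) {M : List (V × Bool)} (hM : ∀ x ∈ M.map Prod.fst, x ∈ s) :
    (rewriteMarked P M).length = M.length ∧ ∀ y ∈ rewriteMarked P M, y ∈ s := by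
  induction M with
  | nil => simp [rewriteMarked]
  | cons p M ih =>
    obtain ⟨x, β⟩ := p
    simp only [List.map_cons, List.mem_cons, forall_eq_or_imp] at hM
    obtain ⟨ihl, ihm⟩ := ih hM.2
    obtain ⟨z, hz, hPz⟩ : ∃ z ∈ s, (if β then P x else [x]) = [z] := by
      cases β
      · exact ⟨x, hM.1, rfl⟩
      · simpa using hP x hM.1
    rw [rewriteMarked_cons, hPz]
    exact ⟨by simp [ihl], by simpa [hz] using ihm⟩

variable [DecidableEq V]

@[simp]
theorem count_unmarked (l : List V) (x : V) : (unmarked l).count (x, true) = 0 :=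
  List.count_eq_zero.2 (by simp [unmarked])

theorem count_marked_eq_zero_of_not_mem {x : V} {M : List (V × Bool)}
    (hx : x ∉ M.map Prod.fst) : M.count (x, true) = 0 :=
  List.count_eq_zero.2 fun h => hx (List.mem_map_of_mem h)

theorem rewriteMarked_of_map_fst_eq_replicate {P : V → List V} {x : V} {r : ℕ}
    (hx : P x = List.replicate (r + 1) x) {M : List (V × Bool)} {n : ℕ}
    (hM : M.map Prod.fst = List.replicate n x) :
    rewriteMarked P M = List.replicate (n + r * M.count (x, true)) x := by
  induction M generalizing n with
  | nil =>
    obtain rfl : n = 0 := by simpa using hM.symm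
    rfl
  | cons p M ih =>
    obtain ⟨y, β⟩ := p
    cases n with
    | zero => simp at hM
    | succ n =>
      simp only [List.map_cons, List.replicate_succ, List.cons.injEq] at hM
      obtain ⟨rfl, hM⟩ := hM
      rw [rewriteMarked_cons, ih hM, List.count_cons]
      cases β
      · simp only [Bool.false_eq_true, if_false, List.singleton_append]
        rw [add_right_comm, List.replicate_succ]
        simp
      · simp [hx]
        ring

theorem detStep_one_iff {P : V → List V} {v w : List V} :
    detStep 1 P v w ↔ ∃ M : List (V × Bool), M.map Prod.fst = v ∧
      (∀ x, M.count (x, true) = min 1 (v.count x)) ∧ w = rewriteMarked P M := by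
  constructor
  · rintro ⟨S, f, hcard, hS, hnS, rfl⟩
    refine ⟨List.ofFn fun i => (v.get i, decide (i ∈ S)), ?_, fun x => ?_, ?_⟩
    · rw [List.map_ofFn]
      exact List.ofFn_get v
    · rw [List.count, countP_ofFn_eq_card, ← hcard x]
      congr 1
      ext i
      simp [and_comm]
    · rw [rewriteMarked_ofFn]
      congr 2
      funext i
      by_cases hi : i ∈ S
      · simpa [hi] using hS i hi
      · simpa [hi] using hnS i hi
  · rintro ⟨M, rfl, hcard, rfl⟩
    have hlen : ∀ i : Fin (M.map Prod.fst).length, i.1 < M.length := fun i => by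
      simpa using i.2
    set g : Fin (M.map Prod.fst).length → V × Bool := fun i => M[i.1]'(hlen i)
    have hM : M = List.ofFn g := List.ext_getElem (by simp) fun i _ _ => by simp [g]
    have hget : ∀ i, (M.map Prod.fst).get i = (g i).1 := fun i => by simp [g]
    refine ⟨univ.filter fun i => (g i).2, fun i => if (g i).2 then P (g i).1 else [(g i).1],
      fun x => ?_, fun i hi => ?_, fun i hi => ?_, ?_⟩
    · rw [← hcard x]
      conv_rhs => rw [hM]
      rw [List.count, countP_ofFn_eq_card, filter_filter]
      congr 1
      ext i
      simp only [mem_filter, mem_univ, true_and, hget, beq_iff_eq, Prod.ext_iff]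
      exact and_comm
    · simp only [mem_filter, mem_univ, true_and] at hi
      simp only [Set.mem_ofPred_eq, hi, if_true, hget]
    · simp only [mem_filter, mem_univ, true_and, Bool.not_eq_true] at hi
      simp only [hi, hget, Bool.false_eq_true, if_false]
    · conv_lhs => rw [hM]
      rw [rewriteMarked_ofFn]

def markFixedFirst (P : V → List V) : Finset V → List (V × Bool) → List (V × Bool)
  | _, [] => []
  | s, (x, β) :: M =>
    (x, if P x = [x] then decide (x ∉ s) else β) :: markFixedFirst P (insert x s) M

theorem map_fst_markFixedFirst (P : V → List V) (s : Finset V) (M : List (V × Bool)) :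
    (markFixedFirst P s M).map Prod.fst = M.map Prod.fst := by
  induction M generalizing s with
  | nil => rfl
  | cons p M ih => simp [markFixedFirst, ih]

theorem rewriteMarked_markFixedFirst (P : V → List V) (s : Finset V) (M : List (V × Bool)) :
    rewriteMarked P (markFixedFirst P s M) = rewriteMarked P M := by
  induction M generalizing s with
  | nil => rfl
  | cons p M ih =>
    obtain ⟨x, β⟩ := p
    rw [markFixedFirst, rewriteMarked_cons, rewriteMarked_cons, ih]
    split_ifs <;> simp_all

theorem count_markFixedFirst (P : V → List V) (s : Finset V) (M : List (V × Bool)) (x : V) :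
    (markFixedFirst P s M).count (x, true) = if P x = [x] then
      (if x ∈ s then 0 else min 1 ((M.map Prod.fst).count x)) else M.count (x, true) := by
  induction M generalizing s with
  | nil => simp [markFixedFirst]
  | cons p M ih =>
    obtain ⟨y, β⟩ := p
    simp only [markFixedFirst, List.count_cons, ih, List.map_cons, Finset.mem_insert]
    by_cases hxy : y = x
    · subst hxy
      by_cases hP : P y = [y] <;> by_cases hs : y ∈ s <;> simp [hP, hs]
    · simp [hxy, Ne.symm hxy]

theorem detStep_one_of_count_unfixed {P : V → List V} (M : List (V × Bool))
    (hM : ∀ x, P x ≠ [x] → M.count (x, true) = min 1 ((M.map Prod.fst).count x)) :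
    detStep 1 P (M.map Prod.fst) (rewriteMarked P M) := by
  refine detStep_one_iff.2 ⟨markFixedFirst P ∅ M, map_fst_markFixedFirst P ∅ M, fun x => ?_,
    (rewriteMarked_markFixedFirst P ∅ M).symm⟩
  by_cases hx : P x = [x]
  · simp [count_markFixedFirst, hx]
  · simpa [count_markFixedFirst, hx] using hM x hx

theorem detStep_one_rewrite_occurrence {P : V → List V} {u t : List V} {x : V}
    (hfix : ∀ y ∈ u ++ t, y ≠ x → P y = [y]) :
    detStep 1 P (u ++ x :: t) (u ++ P x ++ t) := by
  have key := detStep_one_of_count_unfixed (P := P)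
    (unmarked u ++ (x, true) :: unmarked t) fun y hy => ?_
  · simpa [rewriteMarked_cons] using key
  · by_cases hyx : y = x
    · subst hyx
      simp [Nat.one_le_iff_ne_zero]
    · have hu : y ∉ u := fun h => hy (hfix y (by simp [h]) hyx)
      have ht : y ∉ t := fun h => hy (hfix y (by simp [h]) hyx)
      simp [List.count_eq_zero.2, hu, ht, Ne.symm hyx]

theorem detStep_one_singleton_iff {P : V → List V} {x : V} {w : List V} :
    detStep 1 P [x] w ↔ w = P x := by
  constructor
  · intro h
    obtain ⟨M, hM, hcount, rfl⟩ := detStep_one_iff.1 h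
    obtain ⟨⟨y, β⟩, rfl, rfl⟩ := List.map_eq_singleton_iff.1 hM
    have := hcount y
    cases β <;> simp_all [rewriteMarked]
  · rintro rfl
    simpa using detStep_one_rewrite_occurrence (P := P) (u := []) (t := []) (x := x) (by simp)

end Marking

open List V5

theorem eq_replicate_append_replicate_of_detStep_one {P : V5 → List V5} {r n : ℕ}
    (hn : n ≠ 0)
    (ha : P a = replicate (r + 1) a) (hd : P d = replicate (r + 1) d)
    (hbc : ∀ x ∈ ({b, c} : Set V5), ∃ y ∈ ({b, c} : Set V5), P x = [y])
    {w v : List V5} (hw : ∀ x ∈ w, x = b ∨ x = c)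
    (h : detStep 1 P (replicate n a ++ w ++ replicate n d) v) :
    ∃ w' : List V5, w'.length = w.length ∧ (∀ x ∈ w', x = b ∨ x = c) ∧
      v = replicate (n + r) a ++ w' ++ replicate (n + r) d := by
  obtain ⟨M, hMv, hcount, rfl⟩ := detStep_one_iff.1 h
  obtain ⟨Maw, Md, rfl, hMaw, hMd⟩ := List.map_eq_append_iff.1 hMv
  obtain ⟨Ma, Mw, rfl, hMa, hMw⟩ := List.map_eq_append_iff.1 hMaw
  have haw : a ∉ w := fun h => by simpa using hw a h
  have hdw : d ∉ w := fun h => by simpa using hw d h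
  have hMa1 : Ma.count (a, true) = 1 := by
    have hMw0 : Mw.count (a, true) = 0 := count_marked_eq_zero_of_not_mem (by rwa [hMw])
    have hMd0 : Md.count (a, true) = 0 := count_marked_eq_zero_of_not_mem (by simp [hMd])
    simpa [hMw0, hMd0, List.count_replicate, List.count_eq_zero.2 haw, Nat.one_le_iff_ne_zero.2 hn]
      using hcount a
  have hMd1 : Md.count (d, true) = 1 := by
    have hMa0 : Ma.count (d, true) = 0 := count_marked_eq_zero_of_not_mem (by simp [hMa])
    have hMw0 : Mw.count (d, true) = 0 := count_marked_eq_zero_of_not_mem (by rwa [hMw])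
    simpa [hMa0, hMw0, List.count_replicate, List.count_eq_zero.2 hdw, Nat.one_le_iff_ne_zero.2 hn]
      using hcount d
  obtain ⟨hlen, hmem⟩ := rewriteMarked_of_maps_singleton hbc (M := Mw) (by simpa [hMw] using hw)
  refine ⟨rewriteMarked P Mw, by rw [hlen, ← hMw, List.length_map], by simpa using hmem, ?_⟩
  rw [rewriteMarked_append, rewriteMarked_append, rewriteMarked_of_map_fst_eq_replicate ha hMa,
    rewriteMarked_of_map_fst_eq_replicate hd hMd, hMa1, hMd1, mul_one]

def tableStep (m : ℕ) (u v : List V5) : Prop :=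
  detStep 1 (P1 m) u v ∨ detStep 1 P2 u v

theorem mem_Lm_of_tableStep {m : ℕ} {u v : List V5} (hu : u ∈ Lm m) (h : tableStep m u v) :
    v ∈ Lm m := by
  rcases hu with hu | ⟨n, hn, w, hwl, hw, rfl⟩
  · rw [Set.mem_singleton_iff] at hu
    subst hu
    rcases h with h | h <;> rw [detStep_one_singleton_iff] at h <;> subst h
    · exact Or.inr ⟨1, le_rfl, replicate m b, by simp, by simp +contextual, by simp [P1]⟩
    · exact Or.inl rfl
  · rcases h with h | h
    · obtain ⟨w', hlen, hw', rfl⟩ := eq_replicate_append_replicate_of_detStep_one (P := P1 m)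
        (r := 0) (by omega) rfl rfl (by rintro x (rfl | rfl) <;> simp [P1]) hw h
      exact Or.inr ⟨n, hn, w', by omega, hw', rfl⟩
    · obtain ⟨w', hlen, hw', rfl⟩ := eq_replicate_append_replicate_of_detStep_one (P := P2)
        (r := 1) (by omega) rfl rfl (by rintro x (rfl | rfl) <;> simp [P2]) hw h
      exact Or.inr ⟨n + 1, by omega, w', by omega, hw', rfl⟩

theorem lang_subset_Lm (m : ℕ) : lang (tableStep m) [e] ⊆ Lm m := by
  intro v hv
  induction hv with
  | refl => exact Or.inl rfl
  | tail _ h ih => exact mem_Lm_of_tableStep ih h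

theorem detStep_P1_b_to_c (m : ℕ) {u t : List V5} (hu : e ∉ u) (ht : e ∉ t) :
    detStep 1 (P1 m) (u ++ b :: t) (u ++ c :: t) := by
  simpa [P1] using detStep_one_rewrite_occurrence (P := P1 m) (x := b) (u := u) (t := t)
    fun y hy hyb => by cases y <;> simp_all [P1]

theorem detStep_P2_pump {n : ℕ} (hn : n ≠ 0) {w : List V5} (hw : ∀ x ∈ w, x = b ∨ x = c) :
    detStep 1 P2 (replicate n a ++ w ++ replicate n d)
      (replicate (n + 1) a ++ w ++ replicate (n + 1) d) := by
  obtain ⟨k, rfl⟩ := Nat.exists_eq_add_one.2 (Nat.pos_of_ne_zero hn)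
  have key := detStep_one_of_count_unfixed (P := P2)
    ((a, true) :: unmarked (replicate k a ++ w) ++ (d, true) :: unmarked (replicate k d))
    fun x hx => ?_
  · simpa [rewriteMarked_cons, P2, replicate_succ] using key
  · have hadew : ∀ y ∈ [a, d, e], y ∉ w := fun y hy hyw => by
      rcases hw y hyw with rfl | rfl <;> simp at hy
    cases x <;> simp_all [P2, List.count_replicate, Nat.one_le_iff_ne_zero]

theorem reflTransGen_tableStep_b_to_bc (m : ℕ) {w : List V5} (hw : ∀ x ∈ w, x = b ∨ x = c) :
    ∀ {p t : List V5}, e ∉ p → e ∉ t →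
      Relation.ReflTransGen (tableStep m) (p ++ replicate w.length b ++ t) (p ++ w ++ t) := by
  induction w with
  | nil => intro p t _ _; simpa using .refl
  | cons x w ih =>
    intro p t hp ht
    simp only [List.forall_mem_cons] at hw
    have hpx : e ∉ p ++ [x] := by
      rcases hw.1 with rfl | rfl <;> simp [hp]
    have key := ih hw.2 hpx ht
    simp only [length_cons, replicate_succ, append_assoc, singleton_append] at key ⊢
    rcases hw.1 with rfl | rfl
    · exact key
    · exact .head (Or.inl (detStep_P1_b_to_c m hp (by simp [ht]))) key

theorem reflTransGen_tableStep_pump (m : ℕ) {w : List V5} (hw : ∀ x ∈ w, x = b ∨ x = c)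
    (k : ℕ) : Relation.ReflTransGen (tableStep m) (replicate 1 a ++ w ++ replicate 1 d)
      (replicate (k + 1) a ++ w ++ replicate (k + 1) d) := by
  induction k with
  | zero => rfl
  | succ k ih => exact ih.tail (Or.inr (detStep_P2_pump k.succ_ne_zero hw))

theorem Lm_subset_lang (m : ℕ) : Lm m ⊆ lang (tableStep m) [e] := by
  rintro _ (h | ⟨n, hn, w, rfl, hw, rfl⟩)
  · rw [Set.mem_singleton_iff.1 h]
    exact .refl
  obtain ⟨k, rfl⟩ := Nat.exists_eq_add_one.2 hn
  have hstart : tableStep w.length [e] (replicate 1 a ++ replicate w.length b ++ replicate 1 d) :=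
    Or.inl (detStep_one_singleton_iff.2 (by simp [P1]))
  exact (Relation.ReflTransGen.single hstart).trans
    ((reflTransGen_tableStep_pump _ (fun _ hx => Or.inl (eq_of_mem_replicate hx)) k).trans
      (reflTransGen_tableStep_b_to_bc _ hw (by simp) (by simp)))

end LimitedStep

theorem stmt7_general (m : ℕ) :
    lang (fun u v => detStep 1 (P1 m) u v ∨ detStep 1 P2 u v) [e] = Lm m :=
  (LimitedStep.lang_subset_Lm m).antisymm (LimitedStep.Lm_subset_lang m)

/-- The 1ℓPT0L system with axiom e and tables P₁, P₂ generates exactly L_m. -/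
theorem stmt7 (m : ℕ) (hm : 1 ≤ m) :
    lang (fun u v => detStep 1 (P1 m) u v ∨ detStep 1 P2 u v) [e] = Lm m :=
  stmt7_general m
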